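/- arXiv:1701.07458 — 3 statements merged into one kernel-verified Lean document; each statement's English description precedes it below -/
import Mathlib

section
/- Let B = (b_{ij}) and C = (c_{ij}) be two n×n multiparameter quantum matrices over R (for the same parameters p, q), such that every entry of B commutes with every entry of C. Let A = BC be their matrix product, a_{ij} = Σ_k b_{ik}c_{kj}. Then rdet(A) = rdet(B)·rdet(C) and cdet(A) = cdet(B)·cdet(C). -/
open Finset

noncomputable section

attribute [local instance] Classical.propDecidable

/-- Ordered product `f 0 * f 1 * ... * f (n-1)` of noncommuting elements. -/
def ordProd {R : Type*} [Monoid R] {n : ℕ} (f : Fin n → R) : R :=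
  (List.ofFn f).prod

/-- The generalized sign `(−q)_σ` with column labels `cols`:
`(−1)^{ℓ(σ)} ∏_{k<k', σ(k)>σ(k')} q_{cols(σ(k')) cols(σ(k))}`. -/
def qSign {N t : ℕ} (q : Fin N → Fin N → ℂ) (cols : Fin t → Fin N)
    (σ : Equiv.Perm (Fin t)) : ℂ :=
  ∏ ij ∈ Finset.univ.filter
      (fun ij : Fin t × Fin t => ij.1 < ij.2 ∧ σ ij.2 < σ ij.1),
    (-(q (cols (σ ij.2)) (cols (σ ij.1))))

/-- The quantum minor `det_q(A^{rows}_{cols})`. -/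
def qMinor {R : Type*} [Ring R] [Algebra ℂ R] {N t : ℕ}
    (q : Fin N → Fin N → ℂ) (rows cols : Fin t → Fin N)
    (a : Fin N → Fin N → R) : R :=
  ∑ σ : Equiv.Perm (Fin t),
    qSign q cols σ • ordProd (fun k => a (rows k) (cols (σ k)))

/-- Quantum row determinant `rdet(A) = Σ_σ (−q)_σ a_{1σ(1)} ⋯ a_{nσ(n)}`. -/
def rdet {R : Type*} [Ring R] [Algebra ℂ R] {N : ℕ}
    (q : Fin N → Fin N → ℂ) (a : Fin N → Fin N → R) : R :=
  ∑ σ : Equiv.Perm (Fin N),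
    qSign q id σ • ordProd (fun i => a i (σ i))

/-- Quantum column determinant `cdet(A) = Σ_σ (−p)_σ a_{σ(1)1} ⋯ a_{σ(n)n}`. -/
def cdet {R : Type*} [Ring R] [Algebra ℂ R] {N : ℕ}
    (p : Fin N → Fin N → ℂ) (a : Fin N → Fin N → R) : R :=
  ∑ σ : Equiv.Perm (Fin N),
    qSign p id σ • ordProd (fun i => a (σ i) i)

/-- Conditions on the parameters: they are nonzero, `p_{ii} = q_{ii} = 1`,
and `p_{ij}p_{ji} = q_{ij}q_{ji} = 1`. -/
def ParamConds {N : ℕ} (p q : Fin N → Fin N → ℂ) : Prop :=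
  (∀ i j, p i j ≠ 0 ∧ q i j ≠ 0) ∧
  (∀ i, p i i = 1 ∧ q i i = 1) ∧
  (∀ i j, p i j * p j i = 1 ∧ q i j * q j i = 1)

/-- The `(p,λ)`-condition: `p_{ij} q_{ij} = λ` for `i < j`. -/
def PLambdaCond {N : ℕ} (p q : Fin N → Fin N → ℂ) (lam : ℂ) : Prop :=
  ∀ i j : Fin N, i < j → p i j * q i j = lam

/-- `A = (a_{ij})` is a multiparameter quantum matrix for the parameters `p, q`. -/
def IsQuantumMatrix {R : Type*} [Ring R] [Algebra ℂ R] {N : ℕ}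
    (p q : Fin N → Fin N → ℂ) (a : Fin N → Fin N → R) : Prop :=
  (∀ i k l : Fin N, k < l → a i k * a i l = q k l • (a i l * a i k)) ∧
  (∀ i j k : Fin N, i < j → a i k * a j k = p i j • (a j k * a i k)) ∧
  (∀ i j k l : Fin N, i < j → k < l →
    a i k * a j l - (q k l / q i j) • (a j l * a i k)
      = q k l • (a i l * a j k) - (q i j)⁻¹ • (a j k * a i l)) ∧
  (∀ i j k l : Fin N, i < j → k < l →
    a i k * a j l - (p i j / p k l) • (a j l * a i k)
      = p i j • (a j k * a i l) - (p k l)⁻¹ • (a i l * a j k))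

/-- `x_1, …, x_n` satisfy the `q`-exterior relations. -/
def QExterior {R : Type*} [Ring R] [Algebra ℂ R] {N : ℕ}
    (q : Fin N → Fin N → ℂ) (x : Fin N → R) : Prop :=
  (∀ i, x i * x i = 0) ∧
  (∀ i j : Fin N, i < j → x j * x i = -(q i j) • (x i * x j))

/-- The quantum integer `[k]_λ = 1 + λ + ⋯ + λ^{k−1}`. -/
def qNum (lam : ℂ) (k : ℕ) : ℂ := ∑ i ∈ Finset.range k, lam ^ i

/-- The quantum factorial `[n]_λ! = [1]_λ [2]_λ ⋯ [n]_λ`. -/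
def qFact (lam : ℂ) (n : ℕ) : ℂ := ∏ k ∈ Finset.range n, qNum lam (k + 1)

/-- The index `2i−1` (1-based), i.e. position `2i` (0-based), inside `Fin (2n)`. -/
def pfIdx1 {n : ℕ} (i : Fin n) : Fin (2 * n) :=
  ⟨2 * i.1, by have := i.isLt; omega⟩

/-- The index `2i` (1-based), i.e. position `2i+1` (0-based), inside `Fin (2n)`. -/
def pfIdx2 {n : ℕ} (i : Fin n) : Fin (2 * n) :=
  ⟨2 * i.1 + 1, by have := i.isLt; omega⟩

/-- The multiparameter quantum Pfaffian
`Pf_q(B) = Σ_σ (−q)_σ b_{σ(1)σ(2)} ⋯ b_{σ(2n−1)σ(2n)}`, the sum over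
permutations `σ` of `{1,…,2n}` with `σ(2i−1) < σ(2i)` for all `i`. -/
def Pf {R : Type*} [Ring R] [Algebra ℂ R] {n : ℕ}
    (q : Fin (2 * n) → Fin (2 * n) → ℂ) (b : Fin (2 * n) → Fin (2 * n) → R) : R :=
  ∑ σ ∈ Finset.univ.filter
      (fun σ : Equiv.Perm (Fin (2 * n)) => ∀ i : Fin n, σ (pfIdx1 i) < σ (pfIdx2 i)),
    qSign q id σ • ordProd (fun i : Fin n => b (σ (pfIdx1 i)) (σ (pfIdx2 i)))

/-- Sub-Pfaffian along an index map `f` (typically the increasing enumeration of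
a subset of the indices): the parameters and the entries are restricted along `f`. -/
def PfOn {R : Type*} [Ring R] [Algebra ℂ R] {N m : ℕ}
    (q : Fin N → Fin N → ℂ) (b : Fin N → Fin N → R) (f : Fin (2 * m) → Fin N) : R :=
  Pf (fun i j => q (f i) (f j)) (fun i j => b (f i) (f j))

/-- `inv(I, J) = ∏_{i ∈ I, j ∈ J, i > j} (−q_{ji})`. -/
def invQ {N : ℕ} (q : Fin N → Fin N → ℂ) (I J : Finset (Fin N)) : ℂ :=
  ∏ i ∈ I, ∏ j ∈ J, if j < i then -(q j i) else 1

/-- The position `k·m + r` within `Fin (m·n)`, i.e. the `r`-th index of the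
`k`-th block of size `m`. -/
def blockIdx {m n : ℕ} (k : Fin n) (r : Fin m) : Fin (m * n) :=
  ⟨k.1 * m + r.1, by
    have hk : k.1 + 1 ≤ n := k.isLt
    have hr : r.1 < m := r.isLt
    calc k.1 * m + r.1 < k.1 * m + m := Nat.add_lt_add_left hr _
      _ = (k.1 + 1) * m := (Nat.succ_mul k.1 m).symm
      _ ≤ n * m := Nat.mul_le_mul hk (le_refl m)
      _ = m * n := Nat.mul_comm n m⟩

/-- The multiparameter quantum hyper-Pfaffian
`Pf_q(B) = Σ_{σ∈Π} (−q)_σ b_{σ(1)…σ(m)} ⋯ b_{σ(m(n−1)+1)…σ(mn)}`, where `Π` is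
the set of permutations of `{1,…,mn}` increasing on each consecutive block of
length `m`. -/
def hPf {R : Type*} [Ring R] [Algebra ℂ R] {m n : ℕ}
    (q : Fin (m * n) → Fin (m * n) → ℂ) (b : (Fin m → Fin (m * n)) → R) : R :=
  ∑ σ ∈ Finset.univ.filter
      (fun σ : Equiv.Perm (Fin (m * n)) =>
        ∀ k : Fin n, StrictMono (fun r : Fin m => σ (blockIdx k r))),
    qSign q id σ • ordProd (fun k : Fin n => b (fun r => σ (blockIdx k r)))

/-- The increasing enumeration of `{1,…,n} \ {k}` (the "hat" of `k`). -/
def hatIdx {n : ℕ} (k : Fin n) (r : Fin (n - 1)) : Fin n :=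
  if h : r.1 < k.1 then ⟨r.1, by have := k.isLt; omega⟩
  else ⟨r.1 + 1, by have := r.isLt; omega⟩

/-- The increasing enumeration of `{s+1,…,n}`. -/
def tailIdx {n : ℕ} (s : ℕ) (k : Fin (n - s)) : Fin n :=
  ⟨s + k.1, by have := k.isLt; omega⟩

/-- The increasing enumeration of `{1,…,t}` inside `{1,…,n}`. -/
def headIdx {n : ℕ} (t : ℕ) (ht : t ≤ n) (k : Fin t) : Fin n :=
  ⟨k.1, lt_of_lt_of_le k.isLt ht⟩

/-- `σ` is a `t`-shuffle: `σ(1) < ⋯ < σ(t)` and `σ(t+1) < ⋯ < σ(n)`. -/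
def IsShuffle {n : ℕ} (t : ℕ) (σ : Equiv.Perm (Fin n)) : Prop :=
  (∀ k l : Fin n, k < l → l.1 < t → σ k < σ l) ∧
  (∀ k l : Fin n, k < l → t ≤ k.1 → σ k < σ l)

/-! Expanding the product, `rdet (B C) = Σ_f b_{1 f(1)} ⋯ b_{n f(n)} · M_f` over all maps `f`,
where `M_f` is the quantum minor of `C` with rows `f(1), …, f(n)`; this uses that the entries of
`B` and `C` commute. Pairing each `σ` with `σ ∘ (t t+1)` in `M_f`, the row relations of `C` give
`M_f = 0` when `f(t) = f(t+1)`, and `M_{f ∘ (t t+1)} = -q_{f(t) f(t+1)} M_f` when `f(t) < f(t+1)`.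
Sorting `f` by adjacent transpositions then yields `M_f = 0` for non-injective `f` and
`M_σ = (-q)_σ rdet C` for permutations. The column determinant is the row determinant of the
transpose, `(B C)ᵀ = Cᵀ Bᵀ` since the entries commute, and the column relations of `B` are the row
relations of `Bᵀ`. -/

open Equiv Function

section OrdProd
variable {M : Type*} [Monoid M]

theorem ordProd_succ {n : ℕ} (f : Fin (n + 1) → M) :
    ordProd f = f 0 * ordProd fun i : Fin n => f i.succ := by
  simp [ordProd, List.ofFn_succ]

theorem Commute.ordProd_right {n : ℕ} {a : M} {y : Fin n → M} (h : ∀ j, Commute a (y j)) :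
    Commute a (ordProd y) :=
  Commute.list_prod_right _ _ fun _ hy => by
    obtain ⟨j, rfl⟩ := List.mem_ofFn.1 hy
    exact h j

theorem ordProd_mul_of_commute {n : ℕ} (x y : Fin n → M) (h : ∀ i j, Commute (y i) (x j)) :
    ordProd (fun i => x i * y i) = ordProd x * ordProd y := by
  induction n with
  | zero => simp [ordProd]
  | succ n ih =>
    have hy : Commute (y 0) (ordProd fun i : Fin n => x i.succ) :=
      Commute.ordProd_right fun j => h 0 j.succ
    rw [ordProd_succ, ordProd_succ x, ordProd_succ y, ih _ _ fun i j => h i.succ j.succ,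
      mul_assoc, mul_assoc, hy.left_comm]

theorem exists_ordProd_eq_mul_mul {m : ℕ} (f : Fin (m + 1) → M) (t : Fin m) :
    ∃ L L' : M, ∀ g : Fin (m + 1) → M, (∀ k, k ≠ t.castSucc → k ≠ t.succ → g k = f k) →
      ordProd g = L * (g t.castSucc * g t.succ) * L' := by
  induction m with
  | zero => exact t.elim0
  | succ m ih =>
    cases t using Fin.cases with
    | zero =>
      refine ⟨1, ordProd fun k : Fin m => f k.succ.succ, fun g hg => ?_⟩
      have htail : (fun k : Fin m => g k.succ.succ) = fun k => f k.succ.succ :=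
        funext fun k => hg _ (by simp [Fin.ext_iff]) (by simp [Fin.ext_iff])
      rw [ordProd_succ, ordProd_succ, htail]
      simp [mul_assoc]
    | succ t =>
      obtain ⟨L, L', hL⟩ := ih (fun k => f k.succ) t
      refine ⟨f 0 * L, L', fun g hg => ?_⟩
      rw [ordProd_succ, hg 0 (by simp [Fin.ext_iff]) (by simp [Fin.ext_iff]),
        hL (fun k => g k.succ) fun k hk hk' => hg _ (by simpa [Fin.ext_iff] using hk)
          (by simpa [Fin.ext_iff] using hk')]
      simp [mul_assoc]

end OrdProd

theorem ordProd_sum {S ι : Type*} [Semiring S] [Fintype ι] {n : ℕ} (g : Fin n → ι → S) :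
    ordProd (fun i => ∑ k, g i k) = ∑ f : Fin n → ι, ordProd fun i => g i (f i) := by
  induction n with
  | zero => simp [ordProd]
  | succ n ih =>
    rw [ordProd_succ, ih, sum_mul_sum, ← Fintype.sum_prod_type',
      ← (Fin.consEquiv fun _ => ι).sum_comp]
    simp [ordProd_succ]

theorem Fin.castSucc_covBy_succ {m : ℕ} (t : Fin m) : t.castSucc ⋖ t.succ :=
  ⟨Fin.castSucc_lt_succ, fun k hk hk' => by simp [Fin.lt_def] at hk hk'; omega⟩

section Inversions
variable {α β : Type*} [LinearOrder α] [LinearOrder β]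

theorem swap_lt_swap_of_covBy [DecidableEq α] {i j a b : α} (hij : i ⋖ j) (hab : a < b)
    (hne : (a, b) ≠ (i, j)) : swap i j a < swap i j b := by
  have := hij.lt
  have := hij.2
  rw [swap_apply_def, swap_apply_def]
  grind

variable [Fintype α]

def invPairs (w : α → β) : Finset (α × α) :=
  univ.filter fun ij => ij.1 < ij.2 ∧ w ij.2 < w ij.1

def invWeight (u : β → β → ℂ) (w : α → β) : ℂ :=
  ∏ ij ∈ invPairs w, -u (w ij.2) (w ij.1)

theorem invWeight_of_strictMono (u : β → β → ℂ) {w : α → β} (hw : StrictMono w) :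
    invWeight u w = 1 :=
  prod_eq_one fun _ hij => by
    obtain ⟨hlt, hw'⟩ := (mem_filter.1 hij).2
    exact absurd (hw hlt) hw'.not_gt

theorem qSign_id_eq_invWeight {N : ℕ} (u : Fin N → Fin N → ℂ) (σ : Perm (Fin N)) :
    qSign u id σ = invWeight u σ := by
  unfold qSign invWeight invPairs
  congr

variable [DecidableEq α] {i j : α}

theorem invPairs_comp_swap {w : α → β} (hij : i ⋖ j) (hw : w i < w j) :
    invPairs (w ∘ swap i j) =
      insert (i, j) ((invPairs w).map (prodCongr (swap i j) (swap i j)).toEmbedding) := by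
  ext ⟨a, b⟩
  simp only [invPairs, mem_insert, mem_map_equiv, mem_filter, mem_univ, true_and, comp_apply,
    prodCongr_symm, symm_swap, prodCongr_apply, Prod.map]
  constructor
  · rintro ⟨hab, hw'⟩
    by_cases hne : (a, b) = (i, j)
    · exact .inl hne
    · exact .inr ⟨swap_lt_swap_of_covBy hij hab hne, hw'⟩
  · rintro (hab | ⟨hab, hw'⟩)
    · obtain ⟨rfl, rfl⟩ := Prod.mk.inj hab
      simpa using ⟨hij.lt, hw⟩
    · refine ⟨?_, hw'⟩
      have hne : (swap i j a, swap i j b) ≠ (i, j) := by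
        intro h
        obtain ⟨ha, hb⟩ := Prod.mk.inj h
        rw [ha, hb] at hw'
        exact hw'.not_gt hw
      simpa using swap_lt_swap_of_covBy hij hab hne

theorem pair_notMem_map_invPairs (w : α → β) (hij : i ⋖ j) :
    (i, j) ∉ (invPairs w).map (prodCongr (swap i j) (swap i j)).toEmbedding := by
  simp [invPairs, hij.lt.not_gt]

theorem invWeight_comp_swap (u : β → β → ℂ) {w : α → β} (hij : i ⋖ j) (hw : w i < w j) :
    invWeight u (w ∘ swap i j) = -u (w i) (w j) * invWeight u w := by
  rw [invWeight, invPairs_comp_swap hij hw, prod_insert (pair_notMem_map_invPairs w hij),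
    prod_map]
  simp [invWeight]

theorem card_invPairs_comp_swap {w : α → β} (hij : i ⋖ j) (hw : w i < w j) :
    #(invPairs (w ∘ swap i j)) = #(invPairs w) + 1 := by
  rw [invPairs_comp_swap hij hw, card_insert_of_notMem (pair_notMem_map_invPairs w hij),
    card_map]

theorem sum_perm_eq_of_pairs {M : Type*} [AddCommMonoid M] {F G : Perm α → M} (hij : i ≠ j)
    (h : ∀ σ : Perm α, σ i < σ j → F σ + F (σ * swap i j) = G σ + G (σ * swap i j)) :
    ∑ σ, F σ = ∑ σ, G σ := by
  have hpairs (H : Perm α → M) : ∑ σ, H σ = ∑ σ with σ i < σ j, (H σ + H (σ * swap i j)) := by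
    rw [sum_add_distrib, ← sum_filter_add_sum_filter_not univ fun σ : Perm α => σ i < σ j]
    congr 1
    refine sum_nbij' (· * swap i j) (· * swap i j) ?_ ?_ ?_ ?_ ?_ <;>
      simp only [mem_filter, mem_univ, true_and, Perm.mul_apply, swap_apply_left,
        swap_apply_right, mul_assoc, swap_mul_self, mul_one, implies_true, not_lt]
    · exact fun σ hσ => lt_of_le_of_ne hσ (σ.injective.ne hij.symm)
    · exact fun σ hσ => hσ.le
  rw [hpairs F, hpairs G]
  exact sum_congr rfl fun σ hσ => h σ (mem_filter.1 hσ).2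

end Inversions

def IsRowQuantumMatrix {R : Type*} [Ring R] [Algebra ℂ R] {N : ℕ}
    (q : Fin N → Fin N → ℂ) (a : Fin N → Fin N → R) : Prop :=
  (∀ i k l : Fin N, k < l → a i k * a i l = q k l • (a i l * a i k)) ∧
  (∀ i j k l : Fin N, i < j → k < l →
    a i k * a j l - (q k l / q i j) • (a j l * a i k)
      = q k l • (a i l * a j k) - (q i j)⁻¹ • (a j k * a i l))

section QuantumMinor
variable {R : Type*} [Ring R] [Algebra ℂ R]

theorem IsQuantumMatrix.isRowQuantumMatrix {N : ℕ} {p q : Fin N → Fin N → ℂ}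
    {a : Fin N → Fin N → R} (h : IsQuantumMatrix p q a) : IsRowQuantumMatrix q a :=
  ⟨h.1, h.2.2.1⟩

theorem IsQuantumMatrix.isRowQuantumMatrix_transpose {N : ℕ} {p q : Fin N → Fin N → ℂ}
    {a : Fin N → Fin N → R} (h : IsQuantumMatrix p q a) :
    IsRowQuantumMatrix p fun i j => a j i :=
  ⟨fun i k l hkl => h.2.1 k l i hkl, fun i j k l hij hkl => h.2.2.2 k l i j hkl hij⟩

theorem IsRowQuantumMatrix.minor_swap_rows {N : ℕ} {u : Fin N → Fin N → ℂ}
    {c : Fin N → Fin N → R} (hc : IsRowQuantumMatrix u c) (hu : ∀ i j, u i j ≠ 0)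
    {x y k l : Fin N} (hxy : x < y) (hkl : k < l) :
    c y k * c x l - u k l • (c y l * c x k) =
      -u x y • (c x k * c y l - u k l • (c x l * c y k)) := by
  have h := congrArg (u x y • ·) (hc.2 x y k l hxy hkl)
  simp only [smul_sub, smul_smul, mul_div_cancel₀ _ (hu x y), mul_inv_cancel₀ (hu x y),
    one_smul] at h
  linear_combination (norm := module) h

variable {m : ℕ} {u : Fin (m + 1) → Fin (m + 1) → ℂ} {c : Fin (m + 1) → Fin (m + 1) → R}

theorem qSign_mul_swap {σ : Perm (Fin (m + 1))} (t : Fin m)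
    (hσ : σ t.castSucc < σ t.succ) :
    qSign u id (σ * swap t.castSucc t.succ) = -u (σ t.castSucc) (σ t.succ) * qSign u id σ := by
  rw [qSign_id_eq_invWeight, qSign_id_eq_invWeight, Perm.coe_mul,
    invWeight_comp_swap u (Fin.castSucc_covBy_succ t) hσ]

theorem qMinor_eq_zero_of_rows_eq (hc : IsRowQuantumMatrix u c) {f : Fin (m + 1) → Fin (m + 1)}
    (t : Fin m) (hf : f t.castSucc = f t.succ) : qMinor u f id c = 0 := by
  rw [qMinor, ← sum_const_zero]
  refine sum_perm_eq_of_pairs (Fin.castSucc_covBy_succ t).lt.ne fun σ hσ => ?_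
  obtain ⟨L, L', hL⟩ := exists_ordProd_eq_mul_mul (fun k => c (f k) (σ k)) t
  simp only [id_eq]
  rw [qSign_mul_swap t hσ, hL _ fun _ _ _ => rfl, hL _ fun k hk hk' => ?_]
  · simp only [Perm.mul_apply, swap_apply_left, swap_apply_right, hf, hc.1 _ _ _ hσ,
      mul_smul_comm, smul_mul_assoc, smul_smul]
    module
  · simp [swap_apply_of_ne_of_ne hk hk']

theorem qMinor_comp_swap (hc : IsRowQuantumMatrix u c) (hu : ∀ i j, u i j ≠ 0)
    {f : Fin (m + 1) → Fin (m + 1)} (t : Fin m) (hf : f t.castSucc < f t.succ) :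
    qMinor u (f ∘ swap t.castSucc t.succ) id c =
      -u (f t.castSucc) (f t.succ) • qMinor u f id c := by
  rw [qMinor, qMinor, smul_sum]
  refine sum_perm_eq_of_pairs (Fin.castSucc_covBy_succ t).lt.ne fun σ hσ => ?_
  obtain ⟨L, L', hL⟩ := exists_ordProd_eq_mul_mul (fun k => c (f k) (σ k)) t
  have hswap := congrArg (fun z => qSign u id σ • (L * z * L')) (hc.minor_swap_rows hu hf hσ)
  simp only [id_eq]
  rw [qSign_mul_swap t hσ, hL _ ?_, hL _ ?_, hL _ fun _ _ _ => rfl, hL _ ?_]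
  · simp only [comp_apply, Perm.mul_apply, swap_apply_left, swap_apply_right,
      mul_sub, sub_mul, mul_smul_comm, smul_mul_assoc, smul_sub, smul_smul] at hswap ⊢
    linear_combination (norm := module) hswap
  all_goals intro k hk hk'; simp [swap_apply_of_ne_of_ne hk hk']

end QuantumMinor

section Multiplicativity
variable {R : Type*} [Ring R] [Algebra ℂ R] {n : ℕ} {u : Fin n → Fin n → ℂ}

theorem qMinor_eq_ite {c : Fin n → Fin n → R} (hc : IsRowQuantumMatrix u c)
    (hu : ∀ i j, u i j ≠ 0) (f : Fin n → Fin n) :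
    qMinor u f id c = if Injective f then invWeight u f • rdet u c else 0 := by
  obtain _ | m := n
  · obtain rfl : f = id := Subsingleton.elim _ _
    rw [if_pos injective_id, invWeight_of_strictMono u strictMono_id, one_smul]
    rfl
  induction hN : #(invPairs f) using Nat.strong_induction_on generalizing f with
  | _ N ih =>
  by_cases hdesc : ∃ t : Fin m, f t.succ < f t.castSucc
  · obtain ⟨t, ht⟩ := hdesc
    obtain ⟨g, rfl⟩ : ∃ g, f = g ∘ swap t.castSucc t.succ :=
      ⟨f ∘ swap t.castSucc t.succ, by ext; simp⟩
    replace ht : g t.castSucc < g t.succ := by simpa using ht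
    rw [card_invPairs_comp_swap (Fin.castSucc_covBy_succ t) ht] at hN
    rw [qMinor_comp_swap hc hu t ht, ih _ (by omega) g rfl,
      invWeight_comp_swap u (Fin.castSucc_covBy_succ t) ht]
    simp only [Equiv.injective_comp, smul_ite, smul_smul, smul_zero]
  by_cases hrep : ∃ t : Fin m, f t.castSucc = f t.succ
  · obtain ⟨t, ht⟩ := hrep
    rw [qMinor_eq_zero_of_rows_eq hc t ht, if_neg fun hf => Fin.castSucc_lt_succ.ne (hf ht)]
  push Not at hdesc hrep
  have hf : StrictMono f :=
    Fin.strictMono_iff_lt_succ.2 fun t => (hdesc t).lt_of_ne (hrep t)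
  obtain rfl := hf.eq_id
  rw [if_pos injective_id, invWeight_of_strictMono u hf, one_smul]
  rfl

theorem rdet_mul {c : Fin n → Fin n → R} (hc : IsRowQuantumMatrix u c) (hu : ∀ i j, u i j ≠ 0)
    (b : Fin n → Fin n → R) (hcomm : ∀ i j k l, Commute (b i j) (c k l)) :
    rdet u (fun i j => ∑ k, b i k * c k j) = rdet u b * rdet u c := by
  calc rdet u (fun i j => ∑ k, b i k * c k j)
      = ∑ f : Fin n → Fin n, ordProd (fun i => b i (f i)) * qMinor u f id c := by
        simp only [rdet, qMinor, id_eq, ordProd_sum, smul_sum, mul_sum]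
        rw [sum_comm]
        refine sum_congr rfl fun f _ => sum_congr rfl fun σ _ => ?_
        rw [ordProd_mul_of_commute _ _ fun i j => (hcomm _ _ _ _).symm, mul_smul_comm]
    _ = ∑ σ : Perm (Fin n), ordProd (fun i => b i (σ i)) * (qSign u id σ • rdet u c) := by
        refine (Fintype.sum_of_injective _ DFunLike.coe_injective _ _ (fun f hf => ?_)
          fun σ => ?_).symm
        · rw [qMinor_eq_ite hc hu, if_neg, mul_zero]
          exact fun hinj => hf ⟨.ofBijective f (Finite.injective_iff_bijective.1 hinj), rfl⟩
        · rw [qMinor_eq_ite hc hu, if_pos σ.injective, qSign_id_eq_invWeight]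
    _ = rdet u b * rdet u c := by
        simp only [rdet, sum_mul, smul_mul_assoc, mul_smul_comm]

theorem commute_rdet {v : Fin n → Fin n → ℂ} {b c : Fin n → Fin n → R}
    (hcomm : ∀ i j k l, Commute (b i j) (c k l)) : Commute (rdet u b) (rdet v c) :=
  .sum_left _ _ _ fun _ _ => .sum_right _ _ _ fun _ _ =>
    ((Commute.ordProd_right fun _ =>
      (Commute.ordProd_right fun _ => (hcomm _ _ _ _).symm).symm).smul_left _).smul_right _

theorem cdet_mul {b : Fin n → Fin n → R} (hb : IsRowQuantumMatrix u fun i j => b j i)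
    (hu : ∀ i j, u i j ≠ 0) (c : Fin n → Fin n → R) (hcomm : ∀ i j k l, Commute (b i j) (c k l)) :
    cdet u (fun i j => ∑ k, b i k * c k j) = cdet u b * cdet u c := by
  have htranspose : cdet u (fun i j => ∑ k, b i k * c k j) =
      rdet u (fun i j => ∑ k, c k i * b j k) := by
    simp only [cdet, rdet, (hcomm _ _ _ _).eq]
  rw [htranspose, rdet_mul hb hu _ fun i j k l => (hcomm l k j i).symm]
  exact (commute_rdet fun i j k l => hcomm j i l k).symm.eq

end Multiplicativity

theorem rdet_cdet_mul_general {R : Type*} [Ring R] [Algebra ℂ R] {n : ℕ}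
    (p q : Fin n → Fin n → ℂ) (hpq : ParamConds p q)
    (b c : Fin n → Fin n → R)
    (hb : IsQuantumMatrix p q b) (hc : IsQuantumMatrix p q c)
    (hcomm : ∀ i j k l, Commute (b i j) (c k l))
    (a : Fin n → Fin n → R) (ha : ∀ i j, a i j = ∑ k, b i k * c k j) :
    rdet q a = rdet q b * rdet q c ∧ cdet p a = cdet p b * cdet p c := by
  obtain rfl : a = fun i j => ∑ k, b i k * c k j := funext₂ ha
  exact ⟨rdet_mul hc.isRowQuantumMatrix (fun i j => (hpq.1 i j).2) b hcomm,
    cdet_mul hb.isRowQuantumMatrix_transpose (fun i j => (hpq.1 i j).1) c hcomm⟩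

/-- The quantum determinants are multiplicative on products of
quantum matrices with mutually commuting entries. -/
theorem rdet_cdet_mul {R : Type*} [Ring R] [Algebra ℂ R] {n : ℕ} (hn : 1 ≤ n)
    (p q : Fin n → Fin n → ℂ) (hpq : ParamConds p q)
    (b c : Fin n → Fin n → R)
    (hb : IsQuantumMatrix p q b) (hc : IsQuantumMatrix p q c)
    (hcomm : ∀ i j k l, Commute (b i j) (c k l))
    (a : Fin n → Fin n → R) (ha : ∀ i j, a i j = ∑ k, b i k * c k j) :
    rdet q a = rdet q b * rdet q c ∧ cdet p a = cdet p b * cdet p c :=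
  rdet_cdet_mul_general p q hpq b c hb hc hcomm a ha
end
end

section
/- Let A = (a_{ij}) be an n×n multiparameter quantum matrix over R with the (p,λ)-condition. If the row indices i_1,…,i_t contain a repetition (i.e., i_s = i_{s'} for some s ≠ s') and 1 ≤ j_1 < ⋯ < j_t ≤ n, then the quantum minor vanishes: det_q(A^{i_1…i_t}_{j_1…j_t}) = 0. -/
open Finset

noncomputable section

attribute [local instance] Classical.propDecidable

/-! Pair each permutation `σ` with `σ * swap s s₁` for adjacent positions `s₁ = s + 1`. The two
terms of the minor share every factor except those at `s` and `s₁`, and together contribute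
`L * det_q(A^{row s, row s₁}_{k l}) * R` with `k = col (σ s) < l = col (σ s₁)`. If `row s = row s₁`
this `2 × 2` quantum minor vanishes by the first relation; otherwise the third relation, with
`q_{ij} q_{ji} = 1`, multiplies it by `-q_{row s₁, row s}` when the two rows are swapped. So an
adjacent repeated row kills the minor, and any repetition becomes adjacent after adjacent row
swaps, each of which only rescales the minor. -/

open Equiv

lemma Fin.swap_lt_swap_iff_of_adjacent {t : ℕ} {s s₁ i j : Fin t} (hadj : s.1 + 1 = s₁.1)
    (h : (i, j) ≠ (s, s₁)) (h' : (i, j) ≠ (s₁, s)) :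
    swap s s₁ i < swap s s₁ j ↔ i < j := by
  simp only [ne_eq, Prod.mk.injEq, Fin.ext_iff] at h h'
  simp only [swap_apply_def, Fin.lt_def, Fin.ext_iff]
  split_ifs <;> omega

lemma ordProd_eq_mul_mul_of_adjacent {R : Type*} [Monoid R] {t : ℕ} (f : Fin t → R)
    {s s₁ : Fin t} (hadj : s.1 + 1 = s₁.1) :
    ∃ L Rt : R, ∀ g : Fin t → R, (∀ k, k ≠ s → k ≠ s₁ → g k = f k) →
      ordProd g = L * (g s * g s₁) * Rt := by
  refine ⟨((List.ofFn f).take s).prod, ((List.ofFn f).drop (s.1 + 2)).prod, fun g hg => ?_⟩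
  have hoff : ∀ k : Fin t, (k.1 < s.1 ∨ s.1 + 2 ≤ k.1) → g k = f k := fun k hk =>
    hg k (fun h => by subst h; omega) (fun h => by subst h; omega)
  have htake : (List.ofFn g).take s = (List.ofFn f).take s :=
    List.ext_getElem (by simp) fun i hi _ => by
      simp only [List.length_take, List.length_ofFn] at hi
      simpa using hoff ⟨i, by omega⟩ (Or.inl (by simp only; omega))
  have hdrop : (List.ofFn g).drop (s.1 + 2) = (List.ofFn f).drop (s.1 + 2) :=
    List.ext_getElem (by simp) fun i hi _ => by
      simp only [List.length_drop, List.length_ofFn] at hi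
      simpa using hoff ⟨s.1 + 2 + i, by omega⟩ (Or.inr (by simp only; omega))
  have hsplit : (List.ofFn g).drop s = g s :: g s₁ :: (List.ofFn g).drop (s.1 + 2) := by
    have hlen : s.1 + 1 < t := hadj ▸ s₁.isLt
    rw [List.drop_eq_getElem_cons (by simp), List.drop_eq_getElem_cons (by simpa using hlen)]
    obtain rfl : s₁ = ⟨s.1 + 1, hlen⟩ := Fin.ext hadj.symm
    simp only [List.getElem_ofFn]
  rw [ordProd, ← List.prod_take_mul_prod_drop _ s, hsplit, htake, hdrop]
  simp only [List.prod_cons, mul_assoc]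

lemma sum_perm_eq_sum_filter_add_mul_swap {M : Type*} [AddCommMonoid M] {t : ℕ}
    (f : Perm (Fin t) → M) {s s₁ : Fin t} (hne : s ≠ s₁) :
    ∑ σ, f σ = ∑ σ ∈ univ.filter (fun σ : Perm (Fin t) => σ s < σ s₁),
      (f σ + f (σ * swap s s₁)) := by
  have hσne : ∀ σ : Perm (Fin t), σ s ≠ σ s₁ := fun σ => σ.injective.ne hne
  rw [← sum_filter_add_sum_filter_not univ (fun σ : Perm (Fin t) => σ s < σ s₁), sum_add_distrib]
  congr 1
  refine sum_nbij' (· * swap s s₁) (· * swap s s₁) ?_ ?_ ?_ ?_ ?_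
  · intro σ hσ
    simp only [not_lt, mem_filter, mem_univ, true_and, Perm.coe_mul, Function.comp_apply,
      swap_apply_left, swap_apply_right] at hσ ⊢
    exact hσ.lt_of_ne (hσne σ).symm
  · intro σ hσ
    simp only [not_lt, mem_filter, mem_univ, true_and, Perm.coe_mul, Function.comp_apply,
      swap_apply_left, swap_apply_right] at hσ ⊢
    exact hσ.le
  all_goals simp [mul_assoc]

lemma qSign_mul_swap_of_adjacent {N t : ℕ} (q : Fin N → Fin N → ℂ) (cols : Fin t → Fin N)
    {σ : Perm (Fin t)} {s s₁ : Fin t} (hadj : s.1 + 1 = s₁.1) (hlt : σ s < σ s₁) :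
    qSign q cols (σ * swap s s₁) = -q (cols (σ s)) (cols (σ s₁)) * qSign q cols σ := by
  have hss : s < s₁ := Fin.lt_def.mpr (by omega)
  -- after reindexing by `swap × swap`, the inversion sets of `σ * swap s s₁` and `σ` differ
  -- exactly by the pair `(s₁, s)`
  let w : Fin t × Fin t → ℂ := fun ij =>
    if ij.1 < ij.2 ∧ σ ij.2 < σ ij.1 then -q (cols (σ ij.2)) (cols (σ ij.1)) else 1
  have key : ∀ i j : Fin t,
      (if swap s s₁ i < swap s s₁ j ∧ σ j < σ i then -q (cols (σ j)) (cols (σ i)) else 1) =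
        (if (i, j) = (s₁, s) then -q (cols (σ s)) (cols (σ s₁)) else 1) * w (i, j) := by
    intro i j
    by_cases h' : (i, j) = (s₁, s)
    · rw [Prod.mk.injEq] at h'
      simp [w, h'.1, h'.2, hss, hlt, lt_asymm hss]
    by_cases h : (i, j) = (s, s₁)
    · rw [Prod.mk.injEq] at h
      simp [w, h.1, h.2, hss.ne, lt_asymm hss, lt_asymm hlt]
    · simp [w, h', Fin.swap_lt_swap_iff_of_adjacent hadj h h']
  rw [qSign, qSign, prod_filter, prod_filter, ← (Equiv.prodCongr (swap s s₁) (swap s s₁)).prod_comp]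
  simp only [Equiv.prodCongr_apply, Prod.map, Perm.coe_mul, Function.comp_apply, swap_apply_self]
  refine (Fintype.prod_congr _ _ fun ij : Fin t × Fin t => key ij.1 ij.2).trans ?_
  rw [prod_mul_distrib, Fintype.prod_ite_eq']

section QuantumMatrix

variable {R : Type*} [Ring R] [Algebra ℂ R] {N t : ℕ}

-- Both sides are `2 × 2` quantum minors: `det_q(A^{ij}_{kl}) = -q_{ji} det_q(A^{ji}_{kl})`.
lemma IsQuantumMatrix.two_minor_swap_rows {p q : Fin N → Fin N → ℂ}
    (hq : ∀ i j, q i j * q j i = 1) {a : Fin N → Fin N → R} (ha : IsQuantumMatrix p q a)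
    {i j k l : Fin N} (hij : i ≠ j) (hkl : k < l) :
    a i k * a j l - q k l • (a i l * a j k) =
      -q j i • (a j k * a i l - q k l • (a j l * a i k)) := by
  have of_lt : ∀ {i j : Fin N}, i < j → a i k * a j l - q k l • (a i l * a j k) =
      -q j i • (a j k * a i l - q k l • (a j l * a i k)) := fun {i j} hlt => by
    have h := ha.2.2.1 i j k l hlt hkl
    rw [div_eq_mul_inv, inv_eq_of_mul_eq_one_right (hq i j)] at h
    linear_combination (norm := module) h
  rcases hij.lt_or_gt with h | h
  · exact of_lt h
  · rw [of_lt h, smul_smul, neg_mul_neg, hq, one_smul]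

lemma exists_qSign_smul_ordProd_add_mul_swap (q : Fin N → Fin N → ℂ) (col : Fin t → Fin N)
    (a : Fin N → Fin N → R) {σ : Perm (Fin t)} {s s₁ : Fin t} (hadj : s.1 + 1 = s₁.1)
    (hlt : σ s < σ s₁) (row₀ : Fin t → Fin N) :
    ∃ L Rt : R, ∀ row : Fin t → Fin N, (∀ k, k ≠ s → k ≠ s₁ → row k = row₀ k) →
      qSign q col σ • ordProd (fun k => a (row k) (col (σ k))) +
          qSign q col (σ * swap s s₁) • ordProd (fun k => a (row k) (col ((σ * swap s s₁) k))) =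
        qSign q col σ • (L * (a (row s) (col (σ s)) * a (row s₁) (col (σ s₁)) -
          q (col (σ s)) (col (σ s₁)) • (a (row s) (col (σ s₁)) * a (row s₁) (col (σ s)))) * Rt) := by
  obtain ⟨L, Rt, hLR⟩ := ordProd_eq_mul_mul_of_adjacent (fun k => a (row₀ k) (col (σ k))) hadj
  refine ⟨L, Rt, fun row hrow => ?_⟩
  have h₁ := hLR (fun k => a (row k) (col (σ k))) fun k hk hk₁ => by simp only [hrow k hk hk₁]
  have h₂ := hLR (fun k => a (row k) (col ((σ * swap s s₁) k))) fun k hk hk₁ => by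
    simp only [hrow k hk hk₁, Perm.coe_mul, Function.comp_apply, swap_apply_of_ne_of_ne hk hk₁]
  simp only [Perm.coe_mul, Function.comp_apply, swap_apply_left, swap_apply_right] at h₂ ⊢
  rw [h₁, h₂, qSign_mul_swap_of_adjacent q col hadj hlt, mul_comm (-q _ _), mul_smul, ← smul_add]
  congr 1
  rw [mul_sub, sub_mul, mul_smul_comm, smul_mul_assoc, neg_smul, sub_eq_add_neg]

variable {p q : Fin N → Fin N → ℂ} {a : Fin N → Fin N → R} {row col : Fin t → Fin N}

lemma qMinor_eq_zero_of_adjacent_eq (ha : IsQuantumMatrix p q a) (hcol : StrictMono col)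
    {s s₁ : Fin t} (hadj : s.1 + 1 = s₁.1) (heq : row s = row s₁) :
    qMinor q row col a = 0 := by
  have hss : s ≠ s₁ := Fin.ne_of_val_ne (by omega)
  rw [qMinor, sum_perm_eq_sum_filter_add_mul_swap _ hss]
  refine sum_eq_zero fun σ hσ => ?_
  have hlt : σ s < σ s₁ := (mem_filter.mp hσ).2
  obtain ⟨L, Rt, hpair⟩ := exists_qSign_smul_ordProd_add_mul_swap q col a hadj hlt row
  rw [hpair row fun _ _ _ => rfl, heq, ← ha.1 _ _ _ (hcol hlt), sub_self, mul_zero, zero_mul,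
    smul_zero]

lemma qMinor_eq_neg_smul_qMinor_comp_swap (hq : ∀ i j, q i j * q j i = 1)
    (ha : IsQuantumMatrix p q a) (hcol : StrictMono col) {s s₁ : Fin t} (hadj : s.1 + 1 = s₁.1)
    (hne : row s ≠ row s₁) :
    qMinor q row col a = -q (row s₁) (row s) • qMinor q (row ∘ swap s s₁) col a := by
  have hss : s ≠ s₁ := Fin.ne_of_val_ne (by omega)
  rw [qMinor, qMinor, sum_perm_eq_sum_filter_add_mul_swap _ hss,
    sum_perm_eq_sum_filter_add_mul_swap _ hss, smul_sum]
  refine sum_congr rfl fun σ hσ => ?_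
  have hlt : σ s < σ s₁ := (mem_filter.mp hσ).2
  obtain ⟨L, Rt, hpair⟩ := exists_qSign_smul_ordProd_add_mul_swap q col a hadj hlt row
  rw [hpair row fun _ _ _ => rfl, hpair (row ∘ swap s s₁) fun k hk hk₁ => by
    simp [swap_apply_of_ne_of_ne hk hk₁], ha.two_minor_swap_rows hq hne (hcol hlt)]
  simp only [Function.comp_apply, swap_apply_left, swap_apply_right, mul_smul_comm, smul_mul_assoc,
    smul_comm (qSign q col σ)]

lemma qMinor_eq_zero_of_lt_of_eq (hq : ∀ i j, q i j * q j i = 1) (ha : IsQuantumMatrix p q a)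
    (hcol : StrictMono col) {s s' : Fin t} (hlt : s < s') (heq : row s = row s') :
    qMinor q row col a = 0 := by
  obtain ⟨d, hd⟩ : ∃ d, s'.1 = s.1 + d + 1 := ⟨s'.1 - s.1 - 1, by omega⟩
  induction d generalizing row s' with
  | zero => exact qMinor_eq_zero_of_adjacent_eq ha hcol hd.symm heq
  | succ d ih =>
    let m : Fin t := ⟨s.1 + d + 1, by omega⟩
    have hm : m.1 + 1 = s'.1 := by simp only [m]; omega
    by_cases hm' : row m = row s'
    · exact qMinor_eq_zero_of_adjacent_eq ha hcol hm hm'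
    rw [qMinor_eq_neg_smul_qMinor_comp_swap hq ha hcol hm hm', ih (s' := m) ?_ ?_ rfl, smul_zero]
    · exact Fin.lt_def.mpr (by simp only [m]; omega)
    · rw [Function.comp_apply, Function.comp_apply, swap_apply_left,
        swap_apply_of_ne_of_ne (Fin.ne_of_val_ne (by simp only [m]; omega))
          (Fin.ne_of_val_ne (by omega)), heq]

end QuantumMatrix

theorem qMinor_eq_zero_of_repeated_row_general {R : Type*} [Ring R] [Algebra ℂ R]
    {n : ℕ}
    (p q : Fin n → Fin n → ℂ) (hpq : ParamConds p q)
    (a : Fin n → Fin n → R) (ha : IsQuantumMatrix p q a)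
    (t : ℕ) (row col : Fin t → Fin n) (hcol : StrictMono col)
    (hrow : ∃ s s' : Fin t, s ≠ s' ∧ row s = row s') :
    qMinor q row col a = 0 := by
  obtain ⟨s, s', hne, heq⟩ := hrow
  have hq : ∀ i j, q i j * q j i = 1 := fun i j => (hpq.2.2 i j).2
  rcases hne.lt_or_gt with hlt | hlt
  · exact qMinor_eq_zero_of_lt_of_eq hq ha hcol hlt heq
  · exact qMinor_eq_zero_of_lt_of_eq hq ha hcol hlt heq.symm

/-- A quantum minor with a repeated row vanishes. -/
theorem qMinor_eq_zero_of_repeated_row {R : Type*} [Ring R] [Algebra ℂ R]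
    {n : ℕ} (lam : ℂ)
    (p q : Fin n → Fin n → ℂ) (hpq : ParamConds p q) (hpl : PLambdaCond p q lam)
    (a : Fin n → Fin n → R) (ha : IsQuantumMatrix p q a)
    (t : ℕ) (row col : Fin t → Fin n) (hcol : StrictMono col)
    (hrow : ∃ s s' : Fin t, s ≠ s' ∧ row s = row s') :
    qMinor q row col a = 0 :=
  qMinor_eq_zero_of_repeated_row_general p q hpq a ha t row col hcol hrow
end
end

section
/- Let B = (b_{ij}) be any 2n×2n array of elements of R. Then for every 0 ≤ t ≤ n, Pf_q(B) = Σ_I inv(I, I^c) · Pf_q(B_I) · Pf_q(B_{I^c}), where the sum runs over all subsets I = {i_1 < ⋯ < i_{2t}} of {1,…,2n} of cardinality 2t and I^c is the complement of I. -/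
open Finset

noncomputable section

attribute [local instance] Classical.propDecidable

/-!
A permutation `σ` of `Fin (2n)` is the same as a subset `I = σ({0,…,2t-1})` of size `2t`
together with the permutations `σ₁`, `σ₂` of `Fin (2t)` and `Fin (2(n-t))` obtained by reading `σ`
on the first `2t` and on the last `2(n-t)` positions through the increasing enumerations of `I` and
`Iᶜ` (`σ = gluePerm … σ₁ σ₂`). Under this correspondence the pairing condition
`σ(2i) < σ(2i+1)` splits into the conditions for `σ₁` and `σ₂`, the ordered product of entries
splits into the two blocks, and the inversions of `σ` are those of `σ₁`, those of `σ₂`, and the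
pairs `j < i` with `i ∈ I`, `j ∈ Iᶜ`, which contribute exactly `inv(I, Iᶜ)`.
-/

section Glue

variable {N T S : ℕ} {I : Finset (Fin N)}

def finSplitEquiv (hTS : T + S = N) : Fin T ⊕ Fin S ≃ Fin N :=
  finSumFinEquiv.trans (finCongr hTS)

@[simp]
lemma val_finSplitEquiv_inl (hTS : T + S = N) (a : Fin T) :
    (finSplitEquiv hTS (.inl a) : ℕ) = a := rfl

@[simp]
lemma val_finSplitEquiv_inr (hTS : T + S = N) (c : Fin S) :
    (finSplitEquiv hTS (.inr c) : ℕ) = T + c := rfl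

@[simp]
lemma finSplitEquiv_inl_lt_inl (hTS : T + S = N) (a b : Fin T) :
    finSplitEquiv hTS (.inl a) < finSplitEquiv hTS (.inl b) ↔ a < b := by
  simp only [Fin.lt_def, val_finSplitEquiv_inl]

@[simp]
lemma finSplitEquiv_inr_lt_inr (hTS : T + S = N) (c d : Fin S) :
    finSplitEquiv hTS (.inr c) < finSplitEquiv hTS (.inr d) ↔ c < d := by
  simp only [Fin.lt_def, val_finSplitEquiv_inr, Nat.add_lt_add_iff_left]

@[simp]
lemma finSplitEquiv_inl_lt_inr (hTS : T + S = N) (a : Fin T) (c : Fin S) :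
    finSplitEquiv hTS (.inl a) < finSplitEquiv hTS (.inr c) := by
  simp only [Fin.lt_def, val_finSplitEquiv_inl, val_finSplitEquiv_inr]
  omega

@[simp]
lemma not_finSplitEquiv_inr_lt_inl (hTS : T + S = N) (a : Fin T) (c : Fin S) :
    ¬ finSplitEquiv hTS (.inr c) < finSplitEquiv hTS (.inl a) :=
  (finSplitEquiv_inl_lt_inr hTS a c).asymm

lemma ordProd_split (hTS : T + S = N) {R : Type*} [Monoid R] (f : Fin N → R) :
    ordProd f = ordProd (fun a => f (finSplitEquiv hTS (.inl a))) *
      ordProd (fun c => f (finSplitEquiv hTS (.inr c))) := by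
  subst hTS
  exact (congrArg List.prod List.ofFn_add).trans (List.prod_append ..)

lemma card_compl_of_card_eq (hTS : T + S = N) (hI : I.card = T) : Iᶜ.card = S := by
  rw [Finset.card_compl, Fintype.card_fin, hI]
  omega

def enumSumCompl (hI : I.card = T) (hIc : Iᶜ.card = S) : Fin T ⊕ Fin S ≃ Fin N :=
  (Equiv.sumCongr (I.orderIsoOfFin hI).toEquiv ((Iᶜ.orderIsoOfFin hIc).toEquiv.trans
    (Equiv.subtypeEquivRight fun _ => Finset.mem_compl))).trans (Equiv.sumCompl (· ∈ I))

@[simp]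
lemma enumSumCompl_inl (hI : I.card = T) (hIc : Iᶜ.card = S) (a : Fin T) :
    enumSumCompl hI hIc (.inl a) = I.orderIsoOfFin hI a := rfl

@[simp]
lemma enumSumCompl_inr (hI : I.card = T) (hIc : Iᶜ.card = S) (c : Fin S) :
    enumSumCompl hI hIc (.inr c) = Iᶜ.orderIsoOfFin hIc c := rfl

def gluePerm (hTS : T + S = N) (hI : I.card = T) (hIc : Iᶜ.card = S)
    (σ₁ : Equiv.Perm (Fin T)) (σ₂ : Equiv.Perm (Fin S)) : Equiv.Perm (Fin N) :=
  (finSplitEquiv hTS).symm.trans ((σ₁.sumCongr σ₂).trans (enumSumCompl hI hIc))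

@[simp]
lemma gluePerm_inl (hTS : T + S = N) (hI : I.card = T) (hIc : Iᶜ.card = S)
    (σ₁ : Equiv.Perm (Fin T)) (σ₂ : Equiv.Perm (Fin S)) (a : Fin T) :
    gluePerm hTS hI hIc σ₁ σ₂ (finSplitEquiv hTS (.inl a)) = I.orderIsoOfFin hI (σ₁ a) := by
  simp [gluePerm]

@[simp]
lemma gluePerm_inr (hTS : T + S = N) (hI : I.card = T) (hIc : Iᶜ.card = S)
    (σ₁ : Equiv.Perm (Fin T)) (σ₂ : Equiv.Perm (Fin S)) (c : Fin S) :
    gluePerm hTS hI hIc σ₁ σ₂ (finSplitEquiv hTS (.inr c)) = Iᶜ.orderIsoOfFin hIc (σ₂ c) := by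
  simp [gluePerm]

lemma qSign_id_eq_prod {t : ℕ} (q : Fin t → Fin t → ℂ) (σ : Equiv.Perm (Fin t)) :
    qSign q id σ = ∏ k, ∏ l, if k < l ∧ σ l < σ k then -q (σ l) (σ k) else 1 := by
  rw [qSign, Finset.prod_filter, Fintype.prod_prod_type]
  rfl

lemma invQ_compl_eq_prod (q : Fin N → Fin N → ℂ) (hI : I.card = T) (hIc : Iᶜ.card = S) :
    invQ q I Iᶜ = ∏ a, ∏ c,
      if (Iᶜ.orderIsoOfFin hIc c : Fin N) < I.orderIsoOfFin hI a then
        -q (Iᶜ.orderIsoOfFin hIc c) (I.orderIsoOfFin hI a) else 1 := by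
  rw [invQ, ← Finset.prod_coe_sort I, ← (I.orderIsoOfFin hI).toEquiv.prod_comp]
  refine Fintype.prod_congr _ _ fun a => ?_
  rw [← Finset.prod_coe_sort Iᶜ, ← (Iᶜ.orderIsoOfFin hIc).toEquiv.prod_comp]
  rfl

lemma qSign_gluePerm (hTS : T + S = N) (hI : I.card = T) (hIc : Iᶜ.card = S)
    (q : Fin N → Fin N → ℂ) (σ₁ : Equiv.Perm (Fin T)) (σ₂ : Equiv.Perm (Fin S)) :
    qSign q id (gluePerm hTS hI hIc σ₁ σ₂) =
      invQ q I Iᶜ *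
        (qSign (fun i j => q (I.orderIsoOfFin hI i) (I.orderIsoOfFin hI j)) id σ₁ *
          qSign (fun i j => q (Iᶜ.orderIsoOfFin hIc i) (Iᶜ.orderIsoOfFin hIc j)) id σ₂) := by
  have cross : ∀ f : Fin T → Fin S → ℂ, ∏ a, ∏ c, f (σ₁ a) (σ₂ c) = ∏ a, ∏ c, f a c :=
    fun f => (Fintype.prod_congr _ _ fun a => Equiv.prod_comp σ₂ (f (σ₁ a))).trans
      (Equiv.prod_comp σ₁ fun a => ∏ c, f a c)
  rw [qSign_id_eq_prod, qSign_id_eq_prod, qSign_id_eq_prod, invQ_compl_eq_prod q hI hIc, ← cross]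
  simp_rw [← (finSplitEquiv hTS).prod_comp]
  simp only [Fintype.prod_sum_type, gluePerm_inl, gluePerm_inr, finSplitEquiv_inl_lt_inl,
    finSplitEquiv_inr_lt_inr, finSplitEquiv_inl_lt_inr, not_finSplitEquiv_inr_lt_inl,
    coe_orderIsoOfFin_apply, OrderEmbedding.lt_iff_lt, true_and, false_and, ↓reduceIte,
    Finset.prod_const_one, mul_one, Finset.prod_mul_distrib]
  rw [mul_left_comm]
  -- the two sides differ only in their `Decidable` instances
  congr

lemma image_gluePerm_inl (hTS : T + S = N) (hI : I.card = T) (hIc : Iᶜ.card = S)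
    (σ₁ : Equiv.Perm (Fin T)) (σ₂ : Equiv.Perm (Fin S)) :
    Finset.univ.image (fun a => gluePerm hTS hI hIc σ₁ σ₂ (finSplitEquiv hTS (.inl a))) = I := by
  simp only [gluePerm_inl, coe_orderIsoOfFin_apply]
  calc _ = (Finset.univ.image σ₁).image (I.orderEmbOfFin hI) := by rw [Finset.image_image]; rfl
    _ = I := by rw [Finset.image_univ_equiv, Finset.image_orderEmbOfFin_univ]

lemma gluePerm_inj (hTS : T + S = N) {I' : Finset (Fin N)} {hI : I.card = T}
    {hIc : Iᶜ.card = S} {hI' : I'.card = T} {hIc' : I'ᶜ.card = S}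
    {σ₁ σ₁' : Equiv.Perm (Fin T)} {σ₂ σ₂' : Equiv.Perm (Fin S)}
    (h : gluePerm hTS hI hIc σ₁ σ₂ = gluePerm hTS hI' hIc' σ₁' σ₂') :
    I = I' ∧ σ₁ = σ₁' ∧ σ₂ = σ₂' := by
  obtain rfl : I = I' := by rw [← image_gluePerm_inl hTS hI hIc σ₁ σ₂, h, image_gluePerm_inl]
  refine ⟨rfl, Equiv.ext fun a => ?_, Equiv.ext fun c => ?_⟩
  · simpa using congr($h (finSplitEquiv hTS (.inl a)))
  · simpa using congr($h (finSplitEquiv hTS (.inr c)))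

lemma exists_gluePerm_eq (hTS : T + S = N) (σ : Equiv.Perm (Fin N)) :
    ∃ (I : Finset (Fin N)) (hI : I.card = T) (hIc : Iᶜ.card = S)
      (σ₁ : Equiv.Perm (Fin T)) (σ₂ : Equiv.Perm (Fin S)), gluePerm hTS hI hIc σ₁ σ₂ = σ := by
  set I := Finset.univ.image fun a => σ (finSplitEquiv hTS (.inl a))
  have hI : I.card = T := (Finset.card_image_of_injective _ (σ.injective.comp
      ((finSplitEquiv hTS).injective.comp Sum.inl_injective))).trans (Finset.card_fin T)
  have hIc := card_compl_of_card_eq hTS hI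
  set τ := (finSplitEquiv hTS).trans (σ.trans (enumSumCompl hI hIc).symm)
  have hτ : Set.MapsTo τ (Set.range .inl) (Set.range .inl) := by
    rintro _ ⟨a, rfl⟩
    rcases hy : τ (.inl a) with b | c
    · exact ⟨b, rfl⟩
    · have hmem : σ (finSplitEquiv hTS (.inl a)) ∈ I := Finset.mem_image_of_mem _ (Finset.mem_univ a)
      have : σ (finSplitEquiv hTS (.inl a)) = enumSumCompl hI hIc (.inr c) := by
        rw [← hy]; simp [τ]
      rw [this, enumSumCompl_inr] at hmem
      exact absurd hmem (Finset.mem_compl.mp (Finset.coe_mem _))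
  obtain ⟨⟨σ₁, σ₂⟩, hσ⟩ := Equiv.Perm.mem_sumCongrHom_range_of_perm_mapsTo_inl hτ
  refine ⟨I, hI, hIc, σ₁, σ₂, Equiv.ext fun k => ?_⟩
  rw [Equiv.Perm.sumCongrHom_apply] at hσ
  simp [gluePerm, hσ, τ]

end Glue

section Pfaffian

variable {R M : Type*} [Ring R] [Algebra ℂ R] [AddCommMonoid M] {n t s : ℕ}

def pfPerms (n : ℕ) : Finset (Equiv.Perm (Fin (2 * n))) :=
  Finset.univ.filter fun σ => ∀ i : Fin n, σ (pfIdx1 i) < σ (pfIdx2 i)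

def pfTerm (q : Fin (2 * n) → Fin (2 * n) → ℂ) (b : Fin (2 * n) → Fin (2 * n) → R)
    (σ : Equiv.Perm (Fin (2 * n))) : R :=
  qSign q id σ • ordProd fun i => b (σ (pfIdx1 i)) (σ (pfIdx2 i))

lemma Pf_eq_sum_pfTerm (q : Fin (2 * n) → Fin (2 * n) → ℂ) (b : Fin (2 * n) → Fin (2 * n) → R) :
    Pf q b = ∑ σ ∈ pfPerms n, pfTerm q b σ := rfl

lemma two_mul_add_two_mul_of_add (hts : t + s = n) : 2 * t + 2 * s = 2 * n := by omega

lemma pfIdx1_finSplitEquiv (hts : t + s = n) (x : Fin t ⊕ Fin s) :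
    pfIdx1 (finSplitEquiv hts x) =
      finSplitEquiv (two_mul_add_two_mul_of_add hts) (x.map pfIdx1 pfIdx1) := by
  ext
  rcases x with i | i <;> simp [pfIdx1, mul_add]

lemma pfIdx2_finSplitEquiv (hts : t + s = n) (x : Fin t ⊕ Fin s) :
    pfIdx2 (finSplitEquiv hts x) =
      finSplitEquiv (two_mul_add_two_mul_of_add hts) (x.map pfIdx2 pfIdx2) := by
  ext
  rcases x with i | i <;> simp [pfIdx2, mul_add, add_assoc]

variable {I : Finset (Fin (2 * n))}

lemma gluePerm_mem_pfPerms_iff (hts : t + s = n) (hI : I.card = 2 * t) (hIc : Iᶜ.card = 2 * s)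
    (σ₁ : Equiv.Perm (Fin (2 * t))) (σ₂ : Equiv.Perm (Fin (2 * s))) :
    gluePerm (two_mul_add_two_mul_of_add hts) hI hIc σ₁ σ₂ ∈ pfPerms n ↔
      σ₁ ∈ pfPerms t ∧ σ₂ ∈ pfPerms s := by
  simp only [pfPerms, Finset.mem_filter, Finset.mem_univ, true_and,
    ← (finSplitEquiv hts).forall_congr_right, Sum.forall, pfIdx1_finSplitEquiv hts,
    pfIdx2_finSplitEquiv hts, Sum.map_inl, Sum.map_inr, gluePerm_inl, gluePerm_inr,
    coe_orderIsoOfFin_apply, OrderEmbedding.lt_iff_lt]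

lemma pfTerm_gluePerm (hts : t + s = n) (hI : I.card = 2 * t) (hIc : Iᶜ.card = 2 * s)
    (q : Fin (2 * n) → Fin (2 * n) → ℂ) (b : Fin (2 * n) → Fin (2 * n) → R)
    (σ₁ : Equiv.Perm (Fin (2 * t))) (σ₂ : Equiv.Perm (Fin (2 * s))) :
    pfTerm q b (gluePerm (two_mul_add_two_mul_of_add hts) hI hIc σ₁ σ₂) =
      invQ q I Iᶜ •
        (pfTerm (fun i j => q (I.orderIsoOfFin hI i) (I.orderIsoOfFin hI j))
            (fun i j => b (I.orderIsoOfFin hI i) (I.orderIsoOfFin hI j)) σ₁ *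
          pfTerm (fun i j => q (Iᶜ.orderIsoOfFin hIc i) (Iᶜ.orderIsoOfFin hIc j))
            (fun i j => b (Iᶜ.orderIsoOfFin hIc i) (Iᶜ.orderIsoOfFin hIc j)) σ₂) := by
  simp only [pfTerm, qSign_gluePerm, ordProd_split hts, pfIdx1_finSplitEquiv hts,
    pfIdx2_finSplitEquiv hts, Sum.map_inl, Sum.map_inr, gluePerm_inl, gluePerm_inr,
    smul_mul_smul_comm, mul_smul]

lemma invQ_smul_PfOn_mul_PfOn (hts : t + s = n) (hI : I.card = 2 * t) (hIc : Iᶜ.card = 2 * s)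
    (q : Fin (2 * n) → Fin (2 * n) → ℂ) (b : Fin (2 * n) → Fin (2 * n) → R) :
    invQ q I Iᶜ • (PfOn q b (fun k => (I.orderIsoOfFin hI k : Fin (2 * n))) *
        PfOn q b (fun k => (Iᶜ.orderIsoOfFin hIc k : Fin (2 * n)))) =
      ∑ p ∈ pfPerms t ×ˢ pfPerms s,
        pfTerm q b (gluePerm (two_mul_add_two_mul_of_add hts) hI hIc p.1 p.2) := by
  simp only [PfOn, Pf_eq_sum_pfTerm, Finset.sum_mul_sum, Finset.smul_sum, Finset.sum_product,
    pfTerm_gluePerm hts]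

lemma sum_pfPerms_eq_sum_gluePerm (hts : t + s = n) (f : Equiv.Perm (Fin (2 * n)) → M) :
    ∑ σ ∈ pfPerms n, f σ =
      ∑ I ∈ Finset.powersetCard (2 * t) (Finset.univ : Finset (Fin (2 * n))),
        if h : I.card = 2 * t ∧ Iᶜ.card = 2 * s then
          ∑ p ∈ pfPerms t ×ˢ pfPerms s,
            f (gluePerm (two_mul_add_two_mul_of_add hts) h.1 h.2 p.1 p.2)
        else 0 := by
  have hTS := two_mul_add_two_mul_of_add hts
  calc ∑ σ ∈ pfPerms n, f σ
      = ∑ x ∈ Finset.powersetCard (2 * t) Finset.univ ×ˢ (pfPerms t ×ˢ pfPerms s),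
          if h : x.1.card = 2 * t ∧ x.1ᶜ.card = 2 * s then
            f (gluePerm hTS h.1 h.2 x.2.1 x.2.2) else 0 := ?_
    _ = _ := by simp only [Finset.sum_product, Finset.sum_dite_irrel, Finset.sum_const_zero]
  symm
  refine Finset.sum_bij
    (fun x hx => gluePerm hTS (Finset.mem_powersetCard_univ.mp (Finset.mem_product.mp hx).1)
      (card_compl_of_card_eq hTS (Finset.mem_powersetCard_univ.mp (Finset.mem_product.mp hx).1))
      x.2.1 x.2.2) ?_ ?_ ?_ ?_
  · rintro ⟨I, σ₁, σ₂⟩ hx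
    simp only [Finset.mem_product] at hx
    exact (gluePerm_mem_pfPerms_iff hts _ _ σ₁ σ₂).mpr hx.2
  · rintro ⟨I, σ₁, σ₂⟩ _ ⟨I', σ₁', σ₂'⟩ _ h
    obtain ⟨rfl, rfl, rfl⟩ := gluePerm_inj hTS h
    rfl
  · intro σ hσ
    obtain ⟨I, hI, hIc, σ₁, σ₂, rfl⟩ := exists_gluePerm_eq hTS σ
    obtain ⟨h₁, h₂⟩ := (gluePerm_mem_pfPerms_iff hts hI hIc σ₁ σ₂).mp hσ
    exact ⟨(I, σ₁, σ₂), by simp [hI, h₁, h₂], rfl⟩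
  · rintro ⟨I, σ₁, σ₂⟩ hx
    have hI := Finset.mem_powersetCard_univ.mp (Finset.mem_product.mp hx).1
    rw [dif_pos ⟨hI, card_compl_of_card_eq hTS hI⟩]

end Pfaffian

theorem pfaffian_laplace_expansion_general {R : Type*} [Ring R] [Algebra ℂ R]
    {n : ℕ} (q : Fin (2 * n) → Fin (2 * n) → ℂ)
    (b : Fin (2 * n) → Fin (2 * n) → R) (t : ℕ) (ht : t ≤ n) :
    Pf q b =
      ∑ I ∈ Finset.powersetCard (2 * t) (Finset.univ : Finset (Fin (2 * n))),
        if h : I.card = 2 * t ∧ Iᶜ.card = 2 * (n - t) then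
          invQ q I Iᶜ •
            (PfOn q b (fun k => (I.orderIsoOfFin h.1 k : Fin (2 * n))) *
             PfOn q b (fun k => (Iᶜ.orderIsoOfFin h.2 k : Fin (2 * n))))
        else 0 := by
  have hts : t + (n - t) = n := by omega
  rw [Pf_eq_sum_pfTerm, sum_pfPerms_eq_sum_gluePerm hts]
  refine Finset.sum_congr rfl fun I _ => dite_congr rfl (fun h => ?_) fun _ => rfl
  exact (invQ_smul_PfOn_mul_PfOn hts h.1 h.2 q b).symm

/-- The Laplace-type expansion of the quantum Pfaffian:
`Pf_q(B) = Σ_I inv(I, I^c) Pf_q(B_I) Pf_q(B_{I^c})`, summed over subsets `I`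
of cardinality `2t`. -/
theorem pfaffian_laplace_expansion {R : Type*} [Ring R] [Algebra ℂ R]
    {n : ℕ} (q : Fin (2 * n) → Fin (2 * n) → ℂ)
    (hq0 : ∀ i j, q i j ≠ 0) (hq1 : ∀ i, q i i = 1)
    (hq2 : ∀ i j, q i j * q j i = 1)
    (b : Fin (2 * n) → Fin (2 * n) → R) (t : ℕ) (ht : t ≤ n) :
    Pf q b =
      ∑ I ∈ Finset.powersetCard (2 * t) (Finset.univ : Finset (Fin (2 * n))),
        if h : I.card = 2 * t ∧ Iᶜ.card = 2 * (n - t) then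
          invQ q I Iᶜ •
            (PfOn q b (fun k => (I.orderIsoOfFin h.1 k : Fin (2 * n))) *
             PfOn q b (fun k => (Iᶜ.orderIsoOfFin h.2 k : Fin (2 * n))))
        else 0 :=
  pfaffian_laplace_expansion_general q b t ht
end
end
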